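/- arXiv:1507.05258 — 5 statements merged into one kernel-verified Lean document; each statement's English description precedes it below -/
import Mathlib

section
/- Suppose w_i > 0 for every i ∈ V. If x* ∈ S is a local minimizer of J on the feasible set S, then every coordinate of x* is binary, i.e., x*_i = 0 or x*_i = 1 for all i ∈ V. -/
/-!
If `x i ≠ 1`, no constraint of `S` is satisfied through the factor `1 - x i`, so moving `x i`
anywhere in `[0, 1]` keeps `x` feasible. Along this segment `J` is `w i * t ^ 2` plus a constant,
which is strictly increasing on `[0, 1]`; a local minimizer therefore has `x i = 0`.
-/

/-- The observability feasible set `S`: all `x : V → ℝ` with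
`f_i(x) = (1 - x i) * ∏_{j ∈ a(i)} (1 - x j) = 0` for every bus `i`,
and box constraints `0 ≤ x i ≤ 1`. -/
def pmuFeasible {V : Type*} [Fintype V] (G : SimpleGraph V) [DecidableRel G.Adj] :
    Set (V → ℝ) :=
  {x | (∀ i, (1 - x i) * ∏ j ∈ G.neighborFinset i, (1 - x j) = 0) ∧
    ∀ i, 0 ≤ x i ∧ x i ≤ 1}

open Set Function

theorem IsLocalMinOn.eq_left_of_strictMonoOn_Icc {α β : Type*} [LinearOrder α]
    [TopologicalSpace α] [OrderTopology α] [DenselyOrdered α] [Preorder β] {f : α → β}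
    {a b c : α} (hf : StrictMonoOn f (Icc a b)) (h : IsLocalMinOn f (Icc a b) c)
    (hc : c ∈ Icc a b) : c = a := by
  by_contra hne
  have hac : a < c := lt_of_le_of_ne hc.1 (Ne.symm hne)
  have hsub : Ioo a c ⊆ Icc a b := Ioo_subset_Icc_self.trans (Icc_subset_Icc_right hc.2)
  have := right_nhdsWithin_Ioo_neBot hac
  obtain ⟨t, hle, ht⟩ :=
    ((h.filter_mono (nhdsWithin_mono _ hsub)).and self_mem_nhdsWithin).exists
  exact (hf (hsub ht) hc ht.2).not_ge hle

theorem strictMonoOn_sum_mul_sq_update {V : Type*} [Fintype V] [DecidableEq V] {w : V → ℝ}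
    {i : V} (hwi : 0 < w i) (x : V → ℝ) :
    StrictMonoOn (fun t => ∑ j, w j * update x i t j ^ 2) (Ici 0) := by
  intro s hs t _ hst
  refine Finset.sum_lt_sum (fun j _ => ?_) ⟨i, Finset.mem_univ i, ?_⟩
  · rcases eq_or_ne j i with rfl | hj
    · simp only [update_self]
      gcongr
    · simp only [update_of_ne hj, le_refl]
  · simp only [update_self]
    gcongr

theorem update_mem_pmuFeasible {V : Type*} [Fintype V] [DecidableEq V] {G : SimpleGraph V}
    [DecidableRel G.Adj] {x : V → ℝ} (hx : x ∈ pmuFeasible G) {i : V} (hi : x i ≠ 1) {t : ℝ}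
    (ht : t ∈ Icc 0 1) : update x i t ∈ pmuFeasible G := by
  have hvanish : ∀ j, 1 - x j = 0 → 1 - update x i t j = 0 := by
    intro j hj
    rwa [update_of_ne]
    rintro rfl
    exact hi (by linarith)
  refine ⟨fun k => ?_, fun k => ?_⟩
  · rcases mul_eq_zero.1 (hx.1 k) with hk | hk
    · exact mul_eq_zero_of_left (hvanish k hk) _
    · obtain ⟨j, hj, hj0⟩ := Finset.prod_eq_zero_iff.1 hk
      exact mul_eq_zero_of_right _ (Finset.prod_eq_zero hj (hvanish j hj0))
  · rcases eq_or_ne k i with rfl | hk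
    · simpa using ht
    · simpa [hk] using hx.2 k

/-- If all weights are positive, then any local minimizer of
`J(x) = ∑ i, w i * (x i)^2` on the feasible set `S` has all coordinates binary. -/
theorem stmt_0 {V : Type*} [Fintype V] (G : SimpleGraph V) [DecidableRel G.Adj]
    (w : V → ℝ) (hw : ∀ i, 0 < w i) (x : V → ℝ)
    (hxS : x ∈ pmuFeasible G)
    (hmin : IsLocalMinOn (fun y : V → ℝ => ∑ i, w i * (y i) ^ 2) (pmuFeasible G) x) :
    ∀ i, x i = 0 ∨ x i = 1 := by
  classical
  intro i
  refine or_iff_not_imp_right.2 fun hi => ?_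
  have hmin' : IsLocalMinOn (fun y : V → ℝ => ∑ i, w i * (y i) ^ 2) (pmuFeasible G)
      (update x i (x i)) := by
    rwa [update_eq_self]
  have hline : IsLocalMinOn (fun t => ∑ j, w j * update x i t j ^ 2) (Icc 0 1) (x i) :=
    hmin'.comp_continuousOn (fun t ht => update_mem_pmuFeasible hxS hi ht) (by fun_prop)
      (hxS.2 i)
  exact hline.eq_left_of_strictMonoOn_Icc
    ((strictMonoOn_sum_mul_sq_update (hw i) x).mono Icc_subset_Ici_self) (hxS.2 i)
end

section
/- Let x ∈ S and suppose there exists k ∈ V with w_k > 0 and 0 < x_k < 1. Then x is not a local minimizer of J on S: for every ε > 0 there exists y ∈ S with ‖y − x‖ < ε and J(y) < J(x). -/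
open Function

theorem not_isLocalMinOn_of_forall_dist_lt {α β : Type*} [PseudoMetricSpace α] [Preorder β]
    {f : α → β} {s : Set α} {x : α}
    (h : ∀ ε > 0, ∃ y ∈ s, dist y x < ε ∧ f y < f x) : ¬ IsLocalMinOn f s x := by
  intro hmin
  obtain ⟨ε, hε, hball⟩ := Metric.mem_nhdsWithin_iff.1 hmin
  obtain ⟨y, hys, hyx, hfy⟩ := h ε hε
  exact (hball ⟨Metric.mem_ball.2 hyx, hys⟩).not_gt hfy

theorem dist_update_left {ι : Type*} [Fintype ι] [DecidableEq ι] {E : ι → Type*}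
    [∀ i, NormedAddCommGroup (E i)] (x : ∀ i, E i) (k : ι) (t : E k) :
    dist (update x k t) x = dist t (x k) := by
  have hsub : update x k t - x = Pi.single k (t - x k) := by
    ext i
    rcases eq_or_ne i k with rfl | hik
    · simp
    · simp [hik]
  rw [dist_eq_norm, dist_eq_norm, hsub, Pi.norm_single]

theorem sum_mul_sq_update_lt {ι : Type*} [Fintype ι] [DecidableEq ι] {w x : ι → ℝ} {k : ι}
    {t : ℝ} (hwk : 0 < w k) (ht : 0 ≤ t) (htx : t < x k) :
    ∑ i, w i * update x k t i ^ 2 < ∑ i, w i * x i ^ 2 := by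
  have hsq : t ^ 2 < x k ^ 2 := by gcongr
  refine Finset.sum_lt_sum (fun i _ => ?_) ⟨k, Finset.mem_univ k, ?_⟩
  · rcases eq_or_ne i k with rfl | hik
    · simp only [update_self]; gcongr
    · rw [update_of_ne hik]
  · rw [update_self]; gcongr

section Feasibility

variable {V : Type*} [Fintype V] {G : SimpleGraph V} [DecidableRel G.Adj] {x : V → ℝ}

theorem observability_constraint_eq_zero_iff (i : V) :
    (1 - x i) * ∏ j ∈ G.neighborFinset i, (1 - x j) = 0 ↔ x i = 1 ∨ ∃ j, G.Adj i j ∧ x j = 1 := by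
  simp only [mul_eq_zero, Finset.prod_eq_zero_iff, SimpleGraph.mem_neighborFinset, sub_eq_zero,
    eq_comm (a := (1 : ℝ))]

theorem update_mem_pmuFeasible_s5 [DecidableEq V] (hx : x ∈ pmuFeasible G) {k : V} (hk : x k ≠ 1)
    {t : ℝ} (ht₀ : 0 ≤ t) (ht₁ : t ≤ 1) : update x k t ∈ pmuFeasible G := by
  have hone : ∀ j, x j = 1 → update x k t j = 1 := fun j hj => by
    rw [update_of_ne (by rintro rfl; exact hk hj), hj]
  refine ⟨fun i => ?_, fun i => ?_⟩
  · rw [observability_constraint_eq_zero_iff]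
    exact ((observability_constraint_eq_zero_iff i).1 (hx.1 i)).imp (hone i)
      fun ⟨j, hij, hj⟩ => ⟨j, hij, hone j hj⟩
  · rcases eq_or_ne i k with rfl | hik
    · rw [update_self]; exact ⟨ht₀, ht₁⟩
    · rw [update_of_ne hik]; exact hx.2 i

end Feasibility

/-- If `x ∈ S` has a strictly fractional coordinate `0 < x k < 1` with positive
weight `w k > 0`, then `x` is not a local minimizer of `J(x) = ∑ i, w i * (x i)^2`
on `S`: arbitrarily close to `x` there are feasible points with strictly smaller
objective. -/
theorem stmt_5 {V : Type*} [Fintype V] (G : SimpleGraph V) [DecidableRel G.Adj]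
    (w : V → ℝ) (x : V → ℝ) (hxS : x ∈ pmuFeasible G)
    (k : V) (hwk : 0 < w k) (h0 : 0 < x k) (h1 : x k < 1) :
    ¬ IsLocalMinOn (fun y : V → ℝ => ∑ i, w i * (y i) ^ 2) (pmuFeasible G) x ∧
    ∀ ε > 0, ∃ y ∈ pmuFeasible G, dist y x < ε ∧
      (∑ i, w i * (y i) ^ 2) < ∑ i, w i * (x i) ^ 2 := by
  classical
  have improve : ∀ ε > 0, ∃ y ∈ pmuFeasible G, dist y x < ε ∧
      (∑ i, w i * (y i) ^ 2) < ∑ i, w i * (x i) ^ 2 := by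
    intro ε hε
    set t := max 0 (x k - ε / 2)
    have ht₀ : 0 ≤ t := le_max_left _ _
    have htx : t < x k := max_lt h0 (by linarith)
    refine ⟨update x k t, update_mem_pmuFeasible_s5 hxS h1.ne ht₀ (htx.le.trans h1.le), ?_,
      sum_mul_sq_update_lt hwk ht₀ htx⟩
    rw [dist_update_left, Real.dist_eq, abs_of_neg (by linarith)]
    linarith [le_max_right 0 (x k - ε / 2)]
  exact ⟨not_isLocalMinOn_of_forall_dist_lt improve, improve⟩
end

section
/- Suppose w_i = 1 for all i ∈ V. Then the minimum of J over the feasible set S is attained, and its value equals the domination number of G, i.e., the minimum cardinality of a dominating set of G. -/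
open Finset

namespace SimpleGraph

variable {V : Type*} (G : SimpleGraph V)

def Dominates (D : Finset V) : Prop :=
  ∀ v, v ∈ D ∨ ∃ d ∈ D, G.Adj v d

noncomputable def dominationNumber : ℕ :=
  sInf {n : ℕ | ∃ D : Finset V, G.Dominates D ∧ D.card = n}

theorem dominates_univ [Fintype V] : G.Dominates univ :=
  fun v => Or.inl (mem_univ v)

theorem exists_dominates_card_eq_dominationNumber [Fintype V] :
    ∃ D : Finset V, G.Dominates D ∧ D.card = G.dominationNumber :=
  Nat.sInf_mem (s := {n | ∃ D : Finset V, G.Dominates D ∧ D.card = n})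
    ⟨_, univ, G.dominates_univ, rfl⟩

variable {G}

theorem dominationNumber_le_card {D : Finset V} (hD : G.Dominates D) :
    G.dominationNumber ≤ D.card :=
  Nat.sInf_le ⟨D, hD, rfl⟩

end SimpleGraph

section Feasible

variable {V : Type*} [Fintype V] {G : SimpleGraph V} [DecidableRel G.Adj]

theorem indicator_mem_pmuFeasible [DecidableEq V] {D : Finset V} (hD : G.Dominates D) :
    (fun i => if i ∈ D then (1 : ℝ) else 0) ∈ pmuFeasible G := by
  refine ⟨fun i => ?_, fun i => by dsimp only; split_ifs <;> norm_num⟩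
  rcases hD i with hi | ⟨d, hd, hadj⟩
  · simp [hi]
  · refine mul_eq_zero_of_right _ (prod_eq_zero ((G.mem_neighborFinset i d).mpr hadj) ?_)
    simp [hd]

theorem dominates_filter_eq_one_of_mem_pmuFeasible {y : V → ℝ}
    (hy : y ∈ pmuFeasible G) : G.Dominates {i | y i = 1} := by
  intro v
  rcases mul_eq_zero.mp (hy.1 v) with hv | hprod
  · exact Or.inl (by simp [sub_eq_zero.mp hv])
  · obtain ⟨j, hj, hj1⟩ := prod_eq_zero_iff.mp hprod
    exact Or.inr ⟨j, by simp [(sub_eq_zero.mp hj1).symm], (G.mem_neighborFinset v j).mp hj⟩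

theorem sum_sq_indicator [DecidableEq V] (D : Finset V) :
    ∑ i, (if i ∈ D then (1 : ℝ) else 0) ^ 2 = #D := by
  simp [ite_pow]

theorem card_filter_eq_one_le_sum_sq (y : V → ℝ) :
    (#{i | y i = 1} : ℝ) ≤ ∑ i, y i ^ 2 :=
  calc (#{i | y i = 1} : ℝ) = ∑ i ∈ {i | y i = 1}, y i ^ 2 := by
        rw [card_eq_sum_ones, Nat.cast_sum]
        exact sum_congr rfl fun i hi => by simp [(mem_filter.mp hi).2]
    _ ≤ ∑ i, y i ^ 2 :=
        sum_le_sum_of_subset_of_nonneg (subset_univ _) fun i _ _ => sq_nonneg (y i)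

end Feasible

/-- For unit weights, the minimum of `J(x) = ∑ i, w i * (x i)^2` over the feasible
set `S` is attained, and its value equals the domination number of `G`. -/
theorem stmt_10 {V : Type*} [Fintype V] (G : SimpleGraph V) [DecidableRel G.Adj]
    (w : V → ℝ) (hw : ∀ i, w i = 1) :
    ∃ x ∈ pmuFeasible G, (∀ y ∈ pmuFeasible G,
        (∑ i, w i * (x i) ^ 2) ≤ ∑ i, w i * (y i) ^ 2) ∧
      (∑ i, w i * (x i) ^ 2) =
        ((sInf {n : ℕ | ∃ D : Finset V,
          (∀ v, v ∈ D ∨ ∃ d ∈ D, G.Adj v d) ∧ D.card = n} : ℕ) : ℝ) := by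
  classical
  change ∃ x ∈ pmuFeasible G, _ ∧ _ = (G.dominationNumber : ℝ)
  simp only [hw, one_mul]
  obtain ⟨D, hD, hcard⟩ := G.exists_dominates_card_eq_dominationNumber
  have hJD : ∑ i, (if i ∈ D then (1 : ℝ) else 0) ^ 2 = G.dominationNumber := by
    rw [sum_sq_indicator, hcard]
  refine ⟨_, indicator_mem_pmuFeasible hD, fun y hy => ?_, hJD⟩
  calc ∑ i, (if i ∈ D then (1 : ℝ) else 0) ^ 2 = G.dominationNumber := hJD
    _ ≤ (#{i | y i = 1} : ℝ) :=
        Nat.cast_le.mpr (SimpleGraph.dominationNumber_le_card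
          (dominates_filter_eq_one_of_mem_pmuFeasible hy))
    _ ≤ ∑ i, y i ^ 2 := card_filter_eq_one_le_sum_sq y
end

section
/- Suppose G has a vertex i of degree 1, with unique neighbor j. Then the feasible set S is not convex: the vectors 1 − e_i and 1 − e_j (all coordinates equal to 1 except the i-th, respectively j-th, coordinate equal to 0) both belong to S, but their midpoint does not belong to S. -/
namespace SimpleGraph

variable {V : Type*} [Fintype V] (G : SimpleGraph V) [DecidableRel G.Adj]

theorem notMem_pmuFeasible_of_lt_one {x : V → ℝ} {i : V} (hi : x i < 1)
    (hnbr : ∀ j ∈ G.neighborFinset i, x j < 1) : x ∉ pmuFeasible G := by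
  rintro ⟨hf, -⟩
  have hprod : ∏ j ∈ G.neighborFinset i, (1 - x j) ≠ 0 :=
    Finset.prod_ne_zero_iff.mpr fun j hj => (sub_pos.mpr (hnbr j hj)).ne'
  exact mul_ne_zero (sub_pos.mpr hi).ne' hprod (hf i)

variable [DecidableEq V]

theorem onesExcept_mem_pmuFeasible {k l : V} (hkl : G.Adj k l) :
    (fun v => if v = k then (0 : ℝ) else 1) ∈ pmuFeasible G := by
  refine ⟨fun i => ?_, fun i => by dsimp only; split_ifs <;> norm_num⟩
  by_cases hik : i = k
  · subst hik
    refine mul_eq_zero_of_right _ (Finset.prod_eq_zero (i := l) ?_ ?_)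
    · exact (G.mem_neighborFinset _ _).mpr hkl
    · simp [hkl.ne.symm]
  · simp [hik]

end SimpleGraph

theorem stmt_14_general {V : Type*} [Fintype V] [DecidableEq V] (G : SimpleGraph V)
    [DecidableRel G.Adj] (i j : V)
    (hnbr : G.neighborFinset i = {j}) :
    ((fun v => if v = i then (0 : ℝ) else 1) ∈ pmuFeasible G) ∧
    ((fun v => if v = j then (0 : ℝ) else 1) ∈ pmuFeasible G) ∧
    (1 / 2 : ℝ) • ((fun v => if v = i then (0 : ℝ) else 1) +
        (fun v => if v = j then (0 : ℝ) else 1)) ∉ pmuFeasible G ∧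
    ¬ Convex ℝ (pmuFeasible G) := by
  have hij : G.Adj i j := by
    rw [← SimpleGraph.mem_neighborFinset, hnbr]
    exact Finset.mem_singleton_self j
  have hxi := G.onesExcept_mem_pmuFeasible hij
  have hxj := G.onesExcept_mem_pmuFeasible hij.symm
  have hmid : (1 / 2 : ℝ) • ((fun v => if v = i then (0 : ℝ) else 1) +
      (fun v => if v = j then (0 : ℝ) else 1)) ∉ pmuFeasible G := by
    refine G.notMem_pmuFeasible_of_lt_one (i := i) ?_ ?_
    · norm_num [hij.ne]
    · norm_num [hnbr, hij.ne.symm]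
  refine ⟨hxi, hxj, hmid, fun hconv => hmid ?_⟩
  simpa only [smul_add] using hconv hxi hxj (by norm_num) (by norm_num) (by norm_num)

/-- If `G` has a vertex `i` of degree 1 with unique neighbor `j`, then the
feasible set `S` is not convex: the vectors `1 - e_i` and `1 - e_j` belong to
`S`, but their midpoint does not. -/
theorem stmt_14 {V : Type*} [Fintype V] [DecidableEq V] (G : SimpleGraph V)
    [DecidableRel G.Adj] (i j : V) (hdeg : G.degree i = 1)
    (hnbr : G.neighborFinset i = {j}) :
    ((fun v => if v = i then (0 : ℝ) else 1) ∈ pmuFeasible G) ∧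
    ((fun v => if v = j then (0 : ℝ) else 1) ∈ pmuFeasible G) ∧
    (1 / 2 : ℝ) • ((fun v => if v = i then (0 : ℝ) else 1) +
        (fun v => if v = j then (0 : ℝ) else 1)) ∉ pmuFeasible G ∧
    ¬ Convex ℝ (pmuFeasible G) :=
  stmt_14_general G i j hnbr
end

section
/- Every dominating set of the IEEE 14-bus graph has cardinality at least 4; combined with the existence of the dominating set {2, 6, 7, 9}, the domination number of the IEEE 14-bus graph (the minimum number of PMUs needed for full observability) equals 4. -/
/-!
The buses 1, 8, 11 and 14 have pairwise disjoint closed neighbourhoods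
{1,2,5}, {7,8}, {6,10,11} and {9,13,14}. A vertex of a dominating set lies in at most one of
them, while each of them must contain a vertex of the dominating set, so the dominating set has
at least four vertices. The set {2,6,7,9} shows that four suffice.
-/

/-- Edge list of the IEEE 14-bus system. Buses `1,…,14` are represented by the
elements of `Fin 14`, bus `n` being the literal `(n : Fin 14)` (so bus 14 is
`(14 : Fin 14) = 0`). -/
def ieee14Edges : List (Fin 14 × Fin 14) :=
  [(1,2),(1,5),(2,3),(2,4),(2,5),(3,4),(4,5),(4,7),(4,9),(5,6),
   (6,11),(6,12),(6,13),(7,8),(7,9),(9,10),(9,14),(10,11),(12,13),(13,14)]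

/-- The IEEE 14-bus graph. -/
def ieee14 : SimpleGraph (Fin 14) where
  Adj a b := a ≠ b ∧ ((a, b) ∈ ieee14Edges ∨ (b, a) ∈ ieee14Edges)
  symm := ⟨fun _ _ ⟨h1, h2⟩ => ⟨h1.symm, h2.symm⟩⟩
  loopless := ⟨fun _ ⟨h1, _⟩ => h1 rfl⟩

namespace SimpleGraph

variable {V : Type*} (G : SimpleGraph V)

def IsDominatingSet (D : Finset V) : Prop :=
  ∀ v, v ∈ D ∨ ∃ d ∈ D, G.Adj v d

/-- A set of vertices whose closed neighbourhoods are pairwise disjoint (a 2-packing). -/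
def IsPacking (S : Finset V) : Prop :=
  ∀ s ∈ S, ∀ t ∈ S, ∀ x, (x = s ∨ G.Adj s x) → (x = t ∨ G.Adj t x) → s = t

variable {G}

theorem IsDominatingSet.exists_mem {D : Finset V} (hD : G.IsDominatingSet D) (v : V) :
    ∃ d ∈ D, d = v ∨ G.Adj v d := by
  rcases hD v with hv | ⟨d, hd, hvd⟩
  · exact ⟨v, hv, Or.inl rfl⟩
  · exact ⟨d, hd, Or.inr hvd⟩

theorem IsPacking.card_le_card {S D : Finset V} (hS : G.IsPacking S) (hD : G.IsDominatingSet D) :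
    S.card ≤ D.card := by
  choose f hfD hf using hD.exists_mem
  refine Finset.card_le_card_of_injOn f (fun v _ => hfD v) fun s hs t ht hst => ?_
  exact hS s hs t ht (f s) (hf s) (hst ▸ hf t)

end SimpleGraph

instance : DecidableRel ieee14.Adj := fun a b =>
  inferInstanceAs (Decidable (a ≠ b ∧ ((a, b) ∈ ieee14Edges ∨ (b, a) ∈ ieee14Edges)))

theorem ieee14_isDominatingSet : ieee14.IsDominatingSet {2, 6, 7, 9} := by
  unfold SimpleGraph.IsDominatingSet
  decide

theorem ieee14_isPacking : ieee14.IsPacking {1, 8, 11, 14} := by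
  unfold SimpleGraph.IsPacking
  decide

theorem ieee14_four_le_card {D : Finset (Fin 14)} (hD : ieee14.IsDominatingSet D) :
    4 ≤ D.card :=
  ieee14_isPacking.card_le_card hD

/-- Every dominating set of the IEEE 14-bus graph has at least 4 vertices; hence,
together with the dominating set {2,6,7,9}, the domination number of the IEEE
14-bus graph (the minimum number of PMUs for full observability) equals 4. -/
theorem stmt_16 :
    (∀ D : Finset (Fin 14), (∀ v, v ∈ D ∨ ∃ d ∈ D, ieee14.Adj v d) → 4 ≤ D.card) ∧
    sInf {n : ℕ | ∃ D : Finset (Fin 14),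
      (∀ v, v ∈ D ∨ ∃ d ∈ D, ieee14.Adj v d) ∧ D.card = n} = 4 := by
  have hleast : IsLeast {n : ℕ | ∃ D : Finset (Fin 14),
      (∀ v, v ∈ D ∨ ∃ d ∈ D, ieee14.Adj v d) ∧ D.card = n} 4 := by
    refine ⟨⟨{2, 6, 7, 9}, ieee14_isDominatingSet, rfl⟩, ?_⟩
    rintro n ⟨D, hD, rfl⟩
    exact ieee14_four_le_card hD
  exact ⟨fun _ hD => ieee14_four_le_card hD, hleast.csInf_eq⟩
end
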